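/- A refusal time-step Q →X_r Q' with X = 𝔅 (the full set of visible actions), i.e., a 1-step, is possible for Q if and only if every action activated by Q is not urgent in Q (for the prefix fragment of PAFAS_s without τ). -/
import Mathlib


/-- Actions: the internal action τ and visible actions from 𝔅 (named by strings). -/
inductive Act where
  | tau : Act
  | vis : String → Act
deriving DecidableEq

/-- PAFAS_s process terms.  A prefix `pre u α P` carries an urgency flag `u`
(`true` = urgent, i.e. `underline(α).P`; `false` = lazy `α.P`).  A read-set
prefix `read S P` is `{μ1,…,μn} ▷ P` where each `μi` is a (possibly urgent)
action, represented as a pair (urgency flag, action). -/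
inductive Proc where
  | nil : Proc
  | var : String → Proc
  | pre : Bool → Act → Proc → Proc
  | read : List (Bool × Act) → Proc → Proc
  | choice : Proc → Proc → Proc
  | par : Set Act → Proc → Proc → Proc
  | rel : (Act → Act) → Proc → Proc
  | fix : String → Proc → Proc

/-- Substitution of `R` for the free variable `x` (used to unfold recursion). -/
def Proc.subst (x : String) (R : Proc) : Proc → Proc
  | .nil => .nil
  | .var y => if y = x then R else .var y
  | .pre u a P => .pre u a (subst x R P)
  | .read S P => .read S (subst x R P)
  | .choice P Q => .choice (subst x R P) (subst x R Q)
  | .par A P Q => .par A (subst x R P) (subst x R Q)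
  | .rel f P => .rel f (subst x R P)
  | .fix y P => if y = x then .fix y P else .fix y (subst x R P)

/-- Functional operational semantics of PAFAS_s (Table 1). -/
inductive Step : Proc → Act → Proc → Prop where
  | pref {u a P} : Step (.pre u a P) a P
  | sumL {P a P' Q} : Step P a P' → Step (.choice P Q) a P'
  | sumR {P Q a Q'} : Step Q a Q' → Step (.choice P Q) a Q'
  | read1 {S P u a} : (u, a) ∈ S → Step (.read S P) a (.read S P)
  | read2 {S P a P'} : Step P a P' → Step (.read S P) a P'
  | parL {A P a P' Q} : a ∉ A → Step P a P' → Step (.par A P Q) a (.par A P' Q)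
  | parR {A P Q a Q'} : a ∉ A → Step Q a Q' → Step (.par A P Q) a (.par A P Q')
  | parS {A P a P' Q Q'} : a ∈ A → Step P a P' → Step Q a Q' →
      Step (.par A P Q) a (.par A P' Q')
  | rel {P a P' f} : Step P a P' → Step (.rel f P) (f a) (.rel f P')
  | fix {x P a P'} : Step (Proc.subst x (.fix x P) P) a P' → Step (.fix x P) a P'

/-- Make every entry of a read-set urgent. -/
def urgify (S : List (Bool × Act)) : List (Bool × Act) := S.map (fun p => (true, p.2))

/-- Refusal transitional semantics of PAFAS_s (Table 2): `TStep Q X Q'` is the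
time-step `Q →X_r Q'` where `X` is a set of (visible) actions refused. -/
inductive TStep : Proc → Set Act → Proc → Prop where
  | nil {X} : TStep .nil X .nil
  | pref1 {a P X} : TStep (.pre false a P) X (.pre true a P)
  | pref2 {a : Act} {P X} : a ∉ X → a ≠ .tau → TStep (.pre true a P) X (.pre true a P)
  | sum {P X P' Q Q'} : TStep P X P' → TStep Q X Q' →
      TStep (.choice P Q) X (.choice P' Q')
  | read {S P X P'} : TStep P X P' →
      (∀ a, (true, a) ∈ S → a ∉ X ∧ a ≠ Act.tau) →
      TStep (.read S P) X (.read (urgify S) P')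
  | par {A P Q X X1 X2 P' Q'} : TStep P X1 P' → TStep Q X2 Q' →
      X ⊆ (A ∩ (X1 ∪ X2)) ∪ ((X1 ∩ X2) \ A) →
      TStep (.par A P Q) X (.par A P' Q')
  | rel {f P X P'} : TStep P ((f ⁻¹' (X ∪ {Act.tau})) \ {Act.tau}) P' →
      TStep (.rel f P) X (.rel f P')
  | fix {x P X P'} : TStep (Proc.subst x (.fix x P) P) X P' → TStep (.fix x P) X P'

/-- The full set of visible actions 𝔅; refusing it is a 1-step `Q →1 Q'`. -/
def fullX : Set Act := {a | a ≠ Act.tau}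

/-- `Steps P l Q`: P performs the sequence of actions `l`, reaching Q. -/
def Steps : Proc → List Act → Proc → Prop
  | P, [], Q => P = Q
  | P, a :: l, Q => ∃ R, Step P a R ∧ Steps R l Q

/-- One move of a timed run: either a 1-step (label `none`) or an action. -/
def Move (Q : Proc) (l : Option Act) (Q' : Proc) : Prop :=
  match l with
  | none => TStep Q fullX Q'
  | some a => Step Q a Q'

/-- `n`-fold iteration of a relation. -/
def iterRel (r : Proc → Proc → Prop) : ℕ → Proc → Proc → Prop
  | 0, P, Q => P = Q
  | n + 1, P, Q => ∃ R, r P R ∧ iterRel r n R Q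

/-- The prefix fragment of PAFAS_s: nil, (lazy or urgent) prefixes of visible
actions (no τ) and choice. -/
inductive Frag : Proc → Prop
  | nil : Frag .nil
  | pre {u : Bool} {s : String} {P : Proc} : Frag P → Frag (.pre u (Act.vis s) P)
  | choice {P Q : Proc} : Frag P → Frag Q → Frag (.choice P Q)

/-- `Urgent Q a`: action `a` occurs urgently (at top level) in `Q`. -/
inductive Urgent : Proc → Act → Prop
  | pre {a : Act} {P : Proc} : Urgent (.pre true a P) a
  | sumL {P Q : Proc} {a : Act} : Urgent P a → Urgent (.choice P Q) a
  | sumR {P Q : Proc} {a : Act} : Urgent Q a → Urgent (.choice P Q) a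


lemma urgent_step {Q : Proc} (hQ : Frag Q) {a : Act} (h : Urgent Q a) :
    ∃ Q', Step Q a Q' := by
  induction hQ with
  | nil => cases h
  | pre _ ih =>
    cases h
    exact ⟨_, Step.pref⟩
  | choice _ _ ih1 ih2 =>
    cases h with
    | sumL h => obtain ⟨Q', hs⟩ := ih1 h; exact ⟨Q', Step.sumL hs⟩
    | sumR h => obtain ⟨Q', hs⟩ := ih2 h; exact ⟨Q', Step.sumR hs⟩

lemma tstep_iff_no_urgent {Q : Proc} (hQ : Frag Q) :
    (∃ Q', TStep Q fullX Q') ↔ ∀ a, ¬ Urgent Q a := by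
  induction hQ with
  | nil =>
    constructor
    · intro _ a h; cases h
    · intro _; exact ⟨_, TStep.nil⟩
  | @pre u s P _ ih =>
    cases u with
    | false =>
      constructor
      · intro _ a h; cases h
      · intro _; exact ⟨_, TStep.pref1⟩
    | true =>
      constructor
      · rintro ⟨Q', hT⟩
        cases hT with
        | pref2 hnot hne =>
          exact absurd (show (Act.vis s) ∈ fullX from fun h => Act.noConfusion h) hnot
      · intro h; exact absurd Urgent.pre (h _)
  | @choice P R _ _ ih1 ih2 =>
    constructor
    · rintro ⟨Q', hT⟩ a h
      cases hT with
      | sum h1 h2 =>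
        cases h with
        | sumL hu => exact (ih1.mp ⟨_, h1⟩) a hu
        | sumR hu => exact (ih2.mp ⟨_, h2⟩) a hu
    · intro h
      obtain ⟨P', hP⟩ := ih1.mpr (fun a hu => h a (Urgent.sumL hu))
      obtain ⟨R', hR⟩ := ih2.mpr (fun a hu => h a (Urgent.sumR hu))
      exact ⟨_, TStep.sum hP hR⟩

/-- for the prefix fragment without τ, a 1-step (a refusal step
with `X = 𝔅`) is possible from `Q` iff every action activated by `Q` is not
urgent in `Q`. -/
theorem one_step_iff_no_urgent_activated (Q : Proc) (hQ : Frag Q) :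
    (∃ Q', TStep Q fullX Q') ↔
      (∀ a, (∃ Q', Step Q a Q') → ¬ Urgent Q a) := by
  constructor
  · rintro hT a _ hu
    exact (tstep_iff_no_urgent hQ).mp hT a hu
  · intro h
    exact (tstep_iff_no_urgent hQ).mpr
      (fun a hu => h a (urgent_step hQ hu) hu)
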